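/- Let G' be the transformed graph of G (vertices V_{G'} = V_G ∪ E_G, with edges from v to (v,t) for each edge (v,t) ∈ E_G, and from (u,v) to (v,t) whenever (u,v),(v,t) ∈ E_G and u ≠ t). Then there is a bijection between the set of no-tottering walks of length n in G and the set of walks of length n in G' starting at a vertex of V_G, and this bijection preserves labels. -/

import Mathlib

open scoped Classical

/-- A finite labeled directed graph: vertices `V`, edge relation `E`, vertex
labels `lv` and edge labels `le`, all labels taken in the alphabet `A`. -/
structure LGraph (A : Type) where
  V : Type
  [fintypeV : Fintype V]
  [decEqV : DecidableEq V]
  E : V → V → Prop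
  [decE : DecidableRel E]
  lv : V → A
  le : V → V → A

attribute [instance] LGraph.fintypeV LGraph.decEqV LGraph.decE

/-- A labeled rooted tree: a root label together with the list of children,
each child carrying the label of the edge connecting it to its parent and
the corresponding labeled subtree. -/
inductive LTree (A : Type) : Type where
  | node : A → List (A × LTree A) → LTree A

namespace LTree

variable {A : Type}

-- `size t` : number of nodes
mutual
def size : LTree A → ℕ
  | .node _ cs => 1 + sizeList cs
def sizeList : List (A × LTree A) → ℕ
  | [] => 0
  | (_, t) :: rest => size t + sizeList rest
end

-- `depth t` : maximal number of edges from the root to a node, plus one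
mutual
def depth : LTree A → ℕ
  | .node _ cs => 1 + depthList cs
def depthList : List (A × LTree A) → ℕ
  | [] => 0
  | (_, t) :: rest => max (depth t) (depthList rest)
end

-- `leaves t` : number of leaf nodes
mutual
def leaves : LTree A → ℕ
  | .node _ [] => 1
  | .node _ (c :: cs) => leavesList (c :: cs)
def leavesList : List (A × LTree A) → ℕ
  | [] => 0
  | (_, t) :: rest => leaves t + leavesList rest
end

/-- branching cardinality: number of leaves minus one -/
def branch (t : LTree A) : ℕ := t.leaves - 1

-- `balanced t h` : `t` is perfectly depth-balanced of order `h` (every leaf at depth `h`)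
mutual
def balanced : LTree A → ℕ → Prop
  | .node _ [], h => h = 1
  | .node _ (c :: cs), h => balancedList (c :: cs) (h - 1) ∧ 2 ≤ h
def balancedList : List (A × LTree A) → ℕ → Prop
  | [], _ => True
  | (_, t) :: rest, h => balanced t h ∧ balancedList rest h
end

end LTree

/-- A tree of graph vertices: the candidate images of the nodes of a tree
under a tree-pattern. -/
inductive VTree (V : Type) : Type where
  | node : V → List (VTree V) → VTree V

namespace VTree

variable {V : Type}

/-- the vertex at the root -/
def root : VTree V → V
  | .node u _ => u

/-- the list of subtrees at the root -/
def children : VTree V → List (VTree V)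
  | .node _ ps => ps

end VTree

/-- `isPattern G t p` : the decoration `p` of the tree `t` by vertices of `G` is a
tree-pattern of `G` with respect to `t`: node labels match, every tree edge is
realized by an edge of `G` with matching label, and sibling nodes are mapped to
distinct vertices. -/
def isPattern {A : Type} (G : LGraph A) : LTree A → VTree G.V → Prop
  | .node a cs, .node u ps =>
    G.lv u = a ∧ ps.length = cs.length ∧
    (∀ i j : Fin ps.length, i ≠ j → (ps.get i).root ≠ (ps.get j).root) ∧
    ∀ i : Fin ps.length, ∀ (h : (i : ℕ) < cs.length),
      G.E u (ps.get i).root ∧ G.le u (ps.get i).root = (cs.get ⟨i, h⟩).1 ∧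
      isPattern G (cs.get ⟨i, h⟩).2 (ps.get i)
termination_by _ p => sizeOf p
decreasing_by
  have h1 : sizeOf (ps.get i) < sizeOf ps := List.sizeOf_lt_of_mem (ps.get_mem i)
  simp only [VTree.node.sizeOf_spec]
  omega

/-- `psiRoot G t u` : number of tree-patterns of `G` with respect to `t` rooted at `u`. -/
noncomputable def psiRoot {A : Type} (G : LGraph A) (t : LTree A) (u : G.V) : ℕ :=
  Set.ncard {p : VTree G.V | isPattern G t p ∧ p.root = u}

/-- `psi G t` : number of tree-patterns of `G` with respect to `t`. -/
noncomputable def psi {A : Type} (G : LGraph A) (t : LTree A) : ℕ :=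
  Set.ncard {p : VTree G.V | isPattern G t p}

/-- `isWalk G w` : `w` is a walk of length `n` in `G` (consecutive vertices joined by edges). -/
def isWalk {A : Type} (G : LGraph A) {n : ℕ} (w : Fin (n + 1) → G.V) : Prop :=
  ∀ i j : Fin (n + 1), (j : ℕ) = (i : ℕ) + 1 → G.E (w i) (w j)

/-- `noTotWalk G w` : the walk `w` is no-tottering: `v_i ≠ v_{i+2}` for all `i`. -/
def noTotWalk {A : Type} (G : LGraph A) {n : ℕ} (w : Fin (n + 1) → G.V) : Prop :=
  ∀ i j : Fin (n + 1), (j : ℕ) = (i : ℕ) + 2 → w i ≠ w j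

/-- `sameLabels G1 G2 w1 w2` : the two walks are identically labeled (corresponding
vertices and edges carry the same labels). -/
def sameLabels {A : Type} (G1 G2 : LGraph A) {n : ℕ}
    (w1 : Fin (n + 1) → G1.V) (w2 : Fin (n + 1) → G2.V) : Prop :=
  (∀ i, G1.lv (w1 i) = G2.lv (w2 i)) ∧
    (∀ i j : Fin (n + 1), (j : ℕ) = (i : ℕ) + 1 → G1.le (w1 i) (w1 j) = G2.le (w2 i) (w2 j))

/-- Walk-count kernel `K^n_Walk`: number of pairs of identically labeled walks of
length `n` in `G1` and `G2`. -/
noncomputable def walkKernel {A : Type} (G1 G2 : LGraph A) (n : ℕ) : ℝ :=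
  ∑ w1 : Fin (n + 1) → G1.V, ∑ w2 : Fin (n + 1) → G2.V,
    if isWalk G1 w1 ∧ isWalk G2 w2 ∧ sameLabels G1 G2 w1 w2 then 1 else 0

/-- The transformed graph `G'` of `G`: its vertices are the vertices and the edges
of `G`; there is an edge from `v` to `(v,t)` for every edge `(v,t)` of `G`, and an
edge from `(u,v)` to `(v,t)` for every pair of consecutive edges of `G` with `u ≠ t`.
A vertex `(u,v)` is labeled by `l(v)` and any edge pointing to `(v,t)` by `l((v,t))`. -/
noncomputable def transform {A : Type} (G : LGraph A) : LGraph A where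
  V := G.V ⊕ {p : G.V × G.V // G.E p.1 p.2}
  fintypeV :=
    have : Finite {p : G.V × G.V // G.E p.1 p.2} := Subtype.finite
    have : Fintype {p : G.V × G.V // G.E p.1 p.2} := Fintype.ofFinite _
    inferInstance
  decEqV := Classical.decEq _
  E := fun x y =>
    match x, y with
    | Sum.inl v, Sum.inr e => e.1.1 = v
    | Sum.inr e, Sum.inr e' => e'.1.1 = e.1.2 ∧ e.1.1 ≠ e'.1.2
    | _, _ => False
  decE := Classical.decRel _
  lv := fun x =>
    match x with
    | Sum.inl v => G.lv v
    | Sum.inr e => G.lv e.1.2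
  le := fun _ y =>
    match y with
    | Sum.inl v => G.lv v
    | Sum.inr e => G.le e.1.1 e.1.2

/-!
Every edge of `transform G` ends at an edge `(a, b)` of `G` whose source `a` is the `G`-vertex
represented by its starting point. Hence a walk of `transform G` from `v ∈ V_G` is forced to be
`v, (v, v₁), (v₁, v₂), …`, so it is determined by the walk `v, v₁, v₂, …` of `G` it projects
to, and the side condition `u ≠ t` on consecutive edges `(u, v), (v, t)` is exactly
no-tottering.
-/
namespace transform

variable {A : Type} {G : LGraph A}

def head : (transform G).V → G.V
  | .inl v => v
  | .inr e => e.1.2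

theorem lv_eq_lv_head (x : (transform G).V) : (transform G).lv x = G.lv (head x) := by
  rcases x with v | e <;> rfl

theorem exists_eq_inr_of_adj {x y : (transform G).V} (h : (transform G).E x y) :
    ∃ hxy : G.E (head x) (head y), y = .inr ⟨(head x, head y), hxy⟩ := by
  rcases x with v | ⟨⟨u, v⟩, huv⟩ <;> rcases y with w | ⟨⟨s, t⟩, hst⟩ <;>
    simp only [transform] at h
  · subst h; exact ⟨hst, rfl⟩
  · obtain ⟨rfl, -⟩ := h; exact ⟨hst, rfl⟩

theorem head_ne_of_adj_of_adj {x y z : (transform G).V} (hxy : (transform G).E x y)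
    (hyz : (transform G).E y z) : head x ≠ head z := by
  obtain ⟨_, hy⟩ := exists_eq_inr_of_adj hxy
  obtain ⟨_, hz⟩ := exists_eq_inr_of_adj hyz
  rw [hy, hz] at hyz
  exact hyz.2

variable {n : ℕ}

noncomputable def liftWalk (w : Fin (n + 1) → G.V) (hw : isWalk G w) :
    Fin (n + 1) → (transform G).V :=
  Fin.cases (.inl (w 0)) fun i => .inr ⟨(w i.castSucc, w i.succ), hw _ _ (by simp)⟩

section liftWalk

variable {w : Fin (n + 1) → G.V} (hw : isWalk G w)

theorem liftWalk_zero : liftWalk w hw 0 = .inl (w 0) := rfl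

theorem liftWalk_of_val_eq_succ {i j : Fin (n + 1)} (hij : (j : ℕ) = i + 1) :
    liftWalk w hw j = .inr ⟨(w i, w j), hw i j hij⟩ := by
  obtain ⟨k, rfl⟩ := Fin.exists_succ_eq.2 (Fin.ne_of_val_ne (by simp [hij] : (j : ℕ) ≠ 0))
  obtain rfl : k.castSucc = i := Fin.ext (by simpa using hij)
  rfl

theorem head_liftWalk : head ∘ liftWalk w hw = w := by
  funext i
  cases i using Fin.cases <;> rfl

theorem isWalk_liftWalk (hnt : noTotWalk G w) : isWalk (transform G) (liftWalk w hw) := by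
  intro i j hij
  rw [liftWalk_of_val_eq_succ hw hij]
  rcases Fin.eq_zero_or_eq_succ i with rfl | ⟨k, rfl⟩
  · rfl
  · rw [liftWalk_of_val_eq_succ hw (i := k.castSucc) (by simp)]
    exact ⟨rfl, hnt _ _ (by simp only [Fin.val_succ, Fin.val_castSucc] at hij ⊢; omega)⟩

theorem lv_liftWalk (i : Fin (n + 1)) : (transform G).lv (liftWalk w hw i) = G.lv (w i) :=
  (lv_eq_lv_head _).trans (congrArg G.lv (congrFun (head_liftWalk hw) i))

theorem le_liftWalk {i j : Fin (n + 1)} (hij : (j : ℕ) = i + 1) :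
    (transform G).le (liftWalk w hw i) (liftWalk w hw j) = G.le (w i) (w j) := by
  rw [liftWalk_of_val_eq_succ hw hij]
  rfl

end liftWalk

section head

variable {w' : Fin (n + 1) → (transform G).V} (hw' : isWalk (transform G) w')

include hw' in
theorem isWalk_head_comp : isWalk G (head ∘ w') :=
  fun i j hij => (exists_eq_inr_of_adj (hw' i j hij)).1

include hw' in
theorem noTotWalk_head_comp : noTotWalk G (head ∘ w') := fun i j hij =>
  head_ne_of_adj_of_adj (hw' i ⟨i + 1, by omega⟩ rfl) (hw' _ j (by dsimp only; omega))

theorem liftWalk_head_comp (h0 : ∃ v, w' 0 = .inl v) :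
    liftWalk (head ∘ w') (isWalk_head_comp hw') = w' := by
  funext i
  rcases Fin.eq_zero_or_eq_succ i with rfl | ⟨k, rfl⟩
  · obtain ⟨v, hv⟩ := h0
    rw [liftWalk_zero, Function.comp_apply, hv]
    rfl
  · rw [liftWalk_of_val_eq_succ _ (i := k.castSucc) (by simp)]
    exact (exists_eq_inr_of_adj (hw' _ _ (by simp))).2.symm

end head

noncomputable def noTotWalkEquiv (G : LGraph A) (n : ℕ) :
    {w : Fin (n + 1) → G.V // isWalk G w ∧ noTotWalk G w} ≃
      {w' : Fin (n + 1) → (transform G).V //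
        isWalk (transform G) w' ∧ ∃ v : G.V, w' 0 = .inl v} where
  toFun w := ⟨liftWalk w.1 w.2.1, isWalk_liftWalk w.2.1 w.2.2, _, liftWalk_zero w.2.1⟩
  invFun w' := ⟨head ∘ w'.1, isWalk_head_comp w'.2.1, noTotWalk_head_comp w'.2.1⟩
  left_inv w := Subtype.ext (head_liftWalk w.2.1)
  right_inv w' := Subtype.ext (liftWalk_head_comp w'.2.1 w'.2.2)

end transform

/-- There is a bijection between the no-tottering walks of length `n` of `G` and the
walks of length `n` of the transformed graph `G'` starting at a vertex of (the copy
of) `V_G`, and this bijection preserves the vertex and edge labels of the walks. -/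
theorem stmt_15 {A : Type} (G : LGraph A) (n : ℕ) :
    ∃ e : {w : Fin (n + 1) → G.V // isWalk G w ∧ noTotWalk G w} ≃
          {w : Fin (n + 1) → (transform G).V //
            isWalk (transform G) w ∧ ∃ v : G.V, w 0 = Sum.inl v},
      ∀ w : {w : Fin (n + 1) → G.V // isWalk G w ∧ noTotWalk G w},
        (∀ i, (transform G).lv ((e w).1 i) = G.lv (w.1 i)) ∧
        (∀ i j : Fin (n + 1), (j : ℕ) = (i : ℕ) + 1 →
          (transform G).le ((e w).1 i) ((e w).1 j) = G.le (w.1 i) (w.1 j)) :=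
  ⟨transform.noTotWalkEquiv G n, fun w =>
    ⟨transform.lv_liftWalk w.2.1, fun _ _ => transform.le_liftWalk w.2.1⟩⟩
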